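/- Let X be an exponential random variable with rate 1 (i.e., P(X > x) = e^{-x} for x ≥ 0). Fix positive constants T, ρ, α with T/ρ > 0 and r_c > 1. Let R be a random variable on [0, r_c] with density f(r) = 2r/r_c². Then P(ρ·X·L(R) ≥ T), where L(r) = 1 for r ∈ [0,1] and L(r) = r^{-α} for r > 1 (a bounded path-loss approximation splitting the integral at 1), equals (1/r_c²)·e^{-T/ρ} + (2/(α r_c²))·(T/ρ)^{-2/α}·Γ(2/α, T/ρ) - (2/α)·((T/ρ)·r_c^{α})^{-2/α}·Γ(2/α, (T/ρ)·r_c^{α}), where Γ(a,x) = ∫_x^∞ e^{-t} t^{a-1} dt is the upper incomplete gamma function. -/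

import Mathlib

open MeasureTheory Real Set

/-- Upper incomplete gamma function Γ(a,x) = ∫_x^∞ e^{-t} t^{a-1} dt. -/
noncomputable def upperGamma (a x : ℝ) : ℝ := ∫ t in Set.Ioi x, Real.exp (-t) * t ^ (a - 1)

lemma upperGamma_sub (a c d : ℝ) (ha : 0 < a) (hc : 0 < c) (hcd : c ≤ d) :
    upperGamma a c - upperGamma a d = ∫ t in c..d, Real.exp (-t) * t ^ (a - 1) := by
  have hint : IntegrableOn (fun t => Real.exp (-t) * t ^ (a - 1)) (Ioi (0:ℝ)) := by
    simpa using Real.GammaIntegral_convergent ha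
  have h1 : IntegrableOn (fun t => Real.exp (-t) * t ^ (a - 1)) (Ioc c d) :=
    hint.mono_set ((Ioc_subset_Ioi_self).trans (Ioi_subset_Ioi hc.le))
  have h2 : IntegrableOn (fun t => Real.exp (-t) * t ^ (a - 1)) (Ioi d) :=
    hint.mono_set (Ioi_subset_Ioi (hc.le.trans hcd))
  have hsplit : upperGamma a c
      = (∫ t in Ioc c d, Real.exp (-t) * t ^ (a - 1)) + upperGamma a d := by
    unfold upperGamma
    rw [← setIntegral_union (Ioc_disjoint_Ioi le_rfl) measurableSet_Ioi h1 h2,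
      Ioc_union_Ioi_eq_Ioi hcd]
  rw [hsplit, intervalIntegral.integral_of_le hcd]
  ring

/-- Neighborhood success probability: with X ~ Exp(1), R with density 2r/r_c² on [0,r_c],
and bounded path loss L(r)=1 on [0,1], L(r)=r^{-α} beyond, the probability
P(ρ X L(R) ≥ T) = ∫_0^1 (2r/r_c²) e^{-T/ρ} dr + ∫_1^{r_c} (2r/r_c²) e^{-(T/ρ)r^α} dr
equals the stated incomplete-gamma closed form. -/
theorem neighborhood_success_probability
    (T ρ α rc : ℝ) (hT : 0 < T) (hρ : 0 < ρ) (hα : 0 < α) (hrc : 1 < rc) :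
    (∫ r in (0:ℝ)..1, (2 * r / rc ^ 2) * Real.exp (-(T / ρ)))
      + (∫ r in (1:ℝ)..rc, (2 * r / rc ^ 2) * Real.exp (-(T / ρ) * r ^ α))
    = (1 / rc ^ 2) * Real.exp (-(T / ρ))
      + (2 / (α * rc ^ 2)) * (T / ρ) ^ (-2 / α) * upperGamma (2 / α) (T / ρ)
      - (2 / α) * ((T / ρ) * rc ^ α) ^ (-2 / α) * upperGamma (2 / α) ((T / ρ) * rc ^ α) := by

  set c := T / ρ with hc_def
  have hc : 0 < c := div_pos hT hρ
  have hrc0 : (0:ℝ) < rc := lt_trans one_pos hrc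
  set a : ℝ := 2 / α with ha_def
  have ha : 0 < a := div_pos two_pos hα
  set K : ℝ := 2 / (α * rc ^ 2) * c ^ (-2 / α) with hK_def
  set d : ℝ := c * rc ^ α with hd_def
  have hrca : (1:ℝ) ≤ rc ^ α := Real.one_le_rpow hrc.le hα.le
  have hcd : c ≤ d := le_mul_of_one_le_right hc.le hrca
  -- first integral
  have hI1 : (∫ r in (0:ℝ)..1, (2 * r / rc ^ 2) * Real.exp (-c))
      = (1 / rc ^ 2) * Real.exp (-c) := by
    have h : ∀ r : ℝ, (2 * r / rc ^ 2) * Real.exp (-c)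
        = (2 * Real.exp (-c) / rc ^ 2) * r := fun r => by ring
    simp_rw [h]
    rw [intervalIntegral.integral_const_mul, integral_id]
    ring
  -- substitution for second integral
  have hpos : ∀ r ∈ uIcc (1:ℝ) rc, (0:ℝ) < r := by
    intro r hr
    rw [uIcc_of_le hrc.le] at hr
    linarith [hr.1]
  have hderiv : ∀ r ∈ uIcc (1:ℝ) rc,
      HasDerivAt (fun x : ℝ => c * x ^ α) (c * (α * r ^ (α - 1))) r := by
    intro r hr
    exact (Real.hasDerivAt_rpow_const (Or.inl (ne_of_gt (hpos r hr)))).const_mul c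
  have hcont : ContinuousOn (fun r : ℝ => c * (α * r ^ (α - 1))) (uIcc (1:ℝ) rc) := by
    have h := (continuousOn_id.rpow_const
      (fun x hx => Or.inl (ne_of_gt (hpos x hx))) : ContinuousOn
        (fun x : ℝ => x ^ (α - 1)) (uIcc (1:ℝ) rc))
    exact continuousOn_const.mul (continuousOn_const.mul h)
  have hg : ContinuousOn (fun t : ℝ => K * (Real.exp (-t) * t ^ (a - 1)))
      ((fun x : ℝ => c * x ^ α) '' uIcc (1:ℝ) rc) := by
    refine ContinuousOn.mul continuousOn_const (ContinuousOn.mul ?_ ?_)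
    · exact (Real.continuous_exp.comp continuous_neg).continuousOn
    · refine continuousOn_id.rpow_const fun x hx => Or.inl ?_
      obtain ⟨r, hr, rfl⟩ := hx
      exact ne_of_gt (mul_pos hc (Real.rpow_pos_of_pos (hpos r hr) α))
  have hsub := intervalIntegral.integral_comp_smul_deriv' hderiv hcont hg
  -- integrand equality on uIcc
  have heqn : EqOn (fun r : ℝ => (2 * r / rc ^ 2) * Real.exp (-c * r ^ α))
      (fun r : ℝ => (c * (α * r ^ (α - 1))) •
        (((fun t : ℝ => K * (Real.exp (-t) * t ^ (a - 1))) ∘ fun x : ℝ => c * x ^ α) r))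
      (uIcc (1:ℝ) rc) := by
    intro r hr
    have hr0 : (0:ℝ) < r := hpos r hr
    have hra : (0:ℝ) < r ^ α := Real.rpow_pos_of_pos hr0 α
    simp only [Function.comp_apply, smul_eq_mul]
    rw [Real.mul_rpow hc.le hra.le, ← Real.rpow_mul hr0.le,
      show ((α : ℝ) * (a - 1)) = 2 - α by rw [ha_def]; field_simp; try ring]
    have h1 : c ^ (-2/α) * c ^ (a - 1) * c = 1 := by
      rw [← Real.rpow_add hc, ← Real.rpow_add_one (ne_of_gt hc),
        show (-2/α + (a-1) + 1 : ℝ) = 0 by rw [ha_def]; ring]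
      exact Real.rpow_zero c
    have h2 : r ^ (2 - α : ℝ) * r ^ (α - 1 : ℝ) = r := by
      rw [← Real.rpow_add hr0, show (2 - α + (α - 1) : ℝ) = 1 by ring, Real.rpow_one]
    calc (2 * r / rc ^ 2) * Real.exp (-c * r ^ α)
        = (2 / (α * rc^2)) * (c ^ (-2/α) * c ^ (a-1) * c) * α
            * (r ^ (2-α:ℝ) * r ^ (α-1:ℝ)) * Real.exp (-(c * r^α)) := by
          rw [h1, h2]; ring_nf; field_simp; try ring
      _ = c * (α * r ^ (α - 1)) *
            (K * (Real.exp (-(c * r ^ α)) * (c ^ (a-1) * r ^ (2-α:ℝ)))) := by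
          rw [hK_def]; ring
  rw [intervalIntegral.integral_congr heqn, hsub]
  have hval : (∫ x in c * (1:ℝ) ^ α..c * rc ^ α, K * (Real.exp (-x) * x ^ (a - 1)))
      = K * (upperGamma a c - upperGamma a d) := by
    rw [Real.one_rpow, mul_one, intervalIntegral.integral_const_mul,
      upperGamma_sub a c d ha hc hcd]
  rw [hval, hI1]
  -- final algebra: (2/α) * d^(-2/α) = K
  have hx : (rc ^ α) ^ (-2/α) = (rc ^ 2)⁻¹ := by
    rw [← Real.rpow_natCast rc 2, ← Real.rpow_neg hrc0.le, ← Real.rpow_mul hrc0.le]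
    norm_num
    rw [show (α * (-2/α) : ℝ) = -2 by field_simp; try ring]
    rw [Real.rpow_neg hrc0.le, Real.rpow_two]
  have hKd : (2/α) * d ^ (-2/α) = K := by
    rw [hd_def, Real.mul_rpow hc.le (Real.rpow_pos_of_pos hrc0 α).le, hx, hK_def]
    field_simp
    try ring
  rw [← hKd]
  ring
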